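/- arXiv:2110.11120 — 7 statements merged into one kernel-verified Lean document; each statement's English description precedes it below -/
import Mathlib

section
/- Let u be a continuous complex-valued function on a locally compact Hausdorff space Y with sup norm ‖u‖ = 1 and let y₀ ∈ Y with |u(y₀)| = 1. Define ũ(y) = (conj(u(y₀))² u(y)² + conj(u(y₀)) u(y))/2. Then ũ(y₀) = 1, ‖ũ‖ = 1, and for every y ∈ Y, |ũ(y)| = 1 implies ũ(y) = 1; moreover {y : ũ(y)=1} = {y : u(y) = u(y₀)} ⊆ {y : |u(y)| = 1}. -/
/-!
Put `w y = conj (u y₀) * u y`, so that `‖w y‖ ≤ 1`, `w y₀ = 1` and `ũ = (w² + w) / 2`.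
Since `‖w² + w‖ ≤ ‖w‖ ‖w + 1‖ ≤ 2`, the value `|ũ(y)| = 1` forces `‖w y‖ = 1` and
`‖w y + 1‖ = ‖w y‖ + ‖1‖`, and strict convexity of `ℂ` then gives `w y = 1`.
-/

open scoped ZeroAtInfty

section PeakPolynomial

variable {A : Type*} [NormedRing A] [NormOneClass A]

lemma norm_sq_add_self_le_two {w : A} (hw : ‖w‖ ≤ 1) : ‖w ^ 2 + w‖ ≤ 2 :=
  calc ‖w ^ 2 + w‖ ≤ ‖w‖ ^ 2 + ‖w‖ := (norm_add_le _ _).trans (by gcongr; exact norm_pow_le _ _)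
    _ ≤ 2 := by nlinarith [norm_nonneg w]

lemma eq_one_of_norm_sq_add_self_eq_two [NormedSpace ℝ A] [StrictConvexSpace ℝ A] {w : A}
    (hw : ‖w‖ ≤ 1) (h : ‖w ^ 2 + w‖ = 2) : w = 1 := by
  have hadd : ‖w + 1‖ ≤ ‖w‖ + 1 := by simpa using norm_add_le w 1
  have hmul : 2 ≤ ‖w‖ * ‖w + 1‖ := by
    calc (2 : ℝ) = ‖w * (w + 1)‖ := by rw [← h]; congr 1; noncomm_ring
      _ ≤ ‖w‖ * ‖w + 1‖ := norm_mul_le _ _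
  have hw_one : ‖w‖ = 1 := by nlinarith [norm_nonneg w, norm_nonneg (w + 1)]
  apply eq_of_norm_eq_of_norm_add_eq (by rw [hw_one, norm_one])
  rw [hw_one, norm_one] at *
  nlinarith [norm_nonneg (w + 1)]

end PeakPolynomial

namespace Complex

lemma norm_half_sq_add_self_le_one {w : ℂ} (hw : ‖w‖ ≤ 1) : ‖(w ^ 2 + w) / 2‖ ≤ 1 := by
  rw [norm_div, RCLike.norm_ofNat]
  linarith [norm_sq_add_self_le_two hw]

lemma eq_one_of_norm_half_sq_add_self_eq_one {w : ℂ} (hw : ‖w‖ ≤ 1)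
    (h : ‖(w ^ 2 + w) / 2‖ = 1) : w = 1 := by
  rw [norm_div, RCLike.norm_ofNat] at h
  exact eq_one_of_norm_sq_add_self_eq_two hw (by linarith)

end Complex

namespace ZeroAtInftyContinuousMap

variable {Y E : Type*} [TopologicalSpace Y] [NormedAddCommGroup E]

lemma norm_apply_le_norm (f : C₀(Y, E)) (y : Y) : ‖f y‖ ≤ ‖f‖ :=
  f.toBCF.norm_coe_le_norm y

lemma norm_eq_of_forall_norm_apply_le {f : C₀(Y, E)} {C : ℝ} {y₀ : Y} (h₀ : ‖f y₀‖ = C)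
    (h : ∀ y, ‖f y‖ ≤ C) : ‖f‖ = C :=
  le_antisymm ((f.toBCF.norm_le (h₀ ▸ norm_nonneg _)).mpr h) (h₀ ▸ f.norm_apply_le_norm y₀)

end ZeroAtInftyContinuousMap

theorem stmt1_general {Y : Type*} [TopologicalSpace Y]
    (u : C₀(Y, ℂ)) (hu : ‖u‖ = 1) (y₀ : Y) (hy₀ : ‖u y₀‖ = 1)
    (ut : C₀(Y, ℂ))
    (hut : ∀ y, ut y =
      ((starRingEnd ℂ (u y₀)) ^ 2 * (u y) ^ 2 + (starRingEnd ℂ (u y₀)) * u y) / 2) :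
    ut y₀ = 1 ∧ ‖ut‖ = 1 ∧ (∀ y, ‖ut y‖ = 1 → ut y = 1) ∧
      {y : Y | ut y = 1} = {y : Y | u y = u y₀} ∧
      {y : Y | u y = u y₀} ⊆ {y : Y | ‖u y‖ = 1} := by
  set c := starRingEnd ℂ (u y₀)
  have hc_ne : c ≠ 0 := by simp [c, ← norm_ne_zero_iff, hy₀]
  have hc_mul : c * u y₀ = 1 := by simp [c, Complex.conj_mul', hy₀]
  have hw_le : ∀ y, ‖c * u y‖ ≤ 1 := fun y => by
    simpa [c, hy₀, hu] using u.norm_apply_le_norm y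
  have hut_w : ∀ y, ut y = ((c * u y) ^ 2 + c * u y) / 2 := fun y => by rw [hut]; ring
  have hut_one : ∀ y, c * u y = 1 → ut y = 1 := fun y hy => by rw [hut_w, hy]; norm_num
  have hpeak : ∀ y, ‖ut y‖ = 1 → c * u y = 1 := fun y hy =>
    Complex.eq_one_of_norm_half_sq_add_self_eq_one (hw_le y) (hut_w y ▸ hy)
  have hw_one_iff : ∀ y, c * u y = 1 ↔ u y = u y₀ := fun y => by
    rw [← hc_mul, mul_right_inj' hc_ne]
  have hut₀ : ut y₀ = 1 := hut_one y₀ hc_mul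
  refine ⟨hut₀, ?_, fun y hy => hut_one y (hpeak y hy), ?_, fun y (hy : u y = u y₀) => ?_⟩
  · refine ZeroAtInftyContinuousMap.norm_eq_of_forall_norm_apply_le (y₀ := y₀) (by simp [hut₀])
      fun y => ?_
    rw [hut_w]
    exact Complex.norm_half_sq_add_self_le_one (hw_le y)
  · ext y
    exact ⟨fun (hy : ut y = 1) => (hw_one_iff y).mp (hpeak y (by simp [hy])),
      fun hy => hut_one y ((hw_one_iff y).mpr hy)⟩
  · simpa [hy] using hy₀

theorem stmt1 {Y : Type*} [TopologicalSpace Y] [LocallyCompactSpace Y] [T2Space Y]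
    (u : C₀(Y, ℂ)) (hu : ‖u‖ = 1) (y₀ : Y) (hy₀ : ‖u y₀‖ = 1)
    (ut : C₀(Y, ℂ))
    (hut : ∀ y, ut y =
      ((starRingEnd ℂ (u y₀)) ^ 2 * (u y) ^ 2 + (starRingEnd ℂ (u y₀)) * u y) / 2) :
    ut y₀ = 1 ∧ ‖ut‖ = 1 ∧ (∀ y, ‖ut y‖ = 1 → ut y = 1) ∧
      {y : Y | ut y = 1} = {y : Y | u y = u y₀} ∧
      {y : Y | u y = u y₀} ⊆ {y : Y | ‖u y‖ = 1} :=
  stmt1_general u hu y₀ hy₀ ut hut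
end

section
/- Let A be a uniformly closed function algebra on a locally compact Hausdorff space X, let f, g ∈ A with ‖f‖ = ‖g‖ = 1, and let x₀ ∈ X be a point in the Choquet boundary of A with |f(x₀)| = 1 and f(x₀) ≠ g(x₀). Then there exists h ∈ A with ‖h‖ = 1 such that ‖f − h‖ = 2 and ‖g − h‖ < 2. -/
open scoped ZeroAtInfty

def StronglySeparates {X : Type*} [TopologicalSpace X] (A : Set C₀(X, ℂ)) : Prop :=
  (∀ x : X, ∃ f ∈ A, f x ≠ 0) ∧ ∀ y z : X, y ≠ z → ∃ g ∈ A, g y ≠ g z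

def IsPeaking {X : Type*} [TopologicalSpace X] (A : Set C₀(X, ℂ)) (g : C₀(X, ℂ)) : Prop :=
  g ∈ A ∧ ‖g‖ = 1 ∧ ∀ x : X, ‖g x‖ = 1 → g x = 1

/-- Membership in the Choquet boundary, characterized by the Urysohn-type peaking property
(Rao–Roy): for every `ε > 0` and open `O ∋ x` there is a peaking function `u ∈ A` with
`u x = 1` and `|u| < ε` off `O`. -/
def InChoquet {X : Type*} [TopologicalSpace X] (A : Set C₀(X, ℂ)) (x : X) : Prop :=
  ∀ ε : ℝ, 0 < ε → ∀ O : Set X, IsOpen O → x ∈ O →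
    ∃ u : C₀(X, ℂ), IsPeaking A u ∧ u x = 1 ∧ ∀ z ∉ O, ‖u z‖ < ε

/-
Let `O` be the open neighbourhood of `x₀` on which `g` stays closer to `g x₀` than `f x₀` is,
and let `u` be a peaking function at `x₀` with `|u| < 1` off `O`; take `h = -f(x₀) u`.
At `x₀` we get `|f - h| = 2|f(x₀)| = 2`. If `‖g - h‖ = 2`, the supremum is attained (functions
vanish at infinity) at some `z`, and by strict convexity of `ℂ` equality in
`|g(z) + f(x₀) u(z)| ≤ 2` forces `|u(z)| = 1`, so `u(z) = 1` and `g(z) = f(x₀)`; but `|u(z)| = 1`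
puts `z` in `O`, where `g(z) ≠ f(x₀)`.
-/

lemma eq_and_norm_eq_one_of_norm_add_eq_two {E : Type*} [NormedAddCommGroup E]
    [NormedSpace ℝ E] [StrictConvexSpace ℝ E] {a b : E} (ha : ‖a‖ ≤ 1) (hb : ‖b‖ ≤ 1)
    (hab : ‖a + b‖ = 2) : a = b ∧ ‖a‖ = 1 := by
  have hsum := norm_add_le a b
  have ha1 : ‖a‖ = 1 := by linarith
  have hb1 : ‖b‖ = 1 := by linarith
  exact ⟨eq_of_norm_eq_of_norm_add_eq (ha1.trans hb1.symm) (by linarith), ha1⟩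

namespace ZeroAtInftyContinuousMap

variable {X E : Type*} [TopologicalSpace X] [NormedAddCommGroup E]

lemma norm_apply_le (F : C₀(X, E)) (z : X) : ‖F z‖ ≤ ‖F‖ :=
  norm_toBCF_eq_norm (f := F) ▸ F.toBCF.norm_coe_le_norm z

lemma exists_norm_apply_eq_norm {F : C₀(X, E)} (hF : F ≠ 0) : ∃ z, ‖F z‖ = ‖F‖ := by
  obtain ⟨z₀, hz₀⟩ : ∃ z₀, F z₀ ≠ 0 := by
    by_contra! h
    exact hF (ext h)
  have hsmall : ∀ᶠ z in Filter.cocompact X, ‖F z‖ ≤ ‖F z₀‖ :=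
    (F.zero_at_infty'.norm.eventually (ge_mem_nhds (a := ‖F z₀‖) (by simpa using hz₀))).mono
      fun _ hz => by simpa using hz
  obtain ⟨z, hz⟩ := (map_continuous F).norm.exists_forall_ge' z₀ hsmall
  refine ⟨z, (norm_apply_le F z).antisymm ?_⟩
  rw [← norm_toBCF_eq_norm]
  exact (BoundedContinuousFunction.norm_le (norm_nonneg _)).mpr hz

lemma norm_lt_of_forall_norm_apply_lt {F : C₀(X, E)} {c : ℝ} (hc : 0 < c)
    (hF : ∀ z, ‖F z‖ < c) : ‖F‖ < c := by
  rcases eq_or_ne F 0 with rfl | hF0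
  · simpa using hc
  obtain ⟨z, hz⟩ := exists_norm_apply_eq_norm hF0
  exact hz ▸ hF z

end ZeroAtInftyContinuousMap

open ZeroAtInftyContinuousMap

section PeakingPerturbation

variable {X : Type*} [TopologicalSpace X] {u : C₀(X, ℂ)}

lemma norm_add_smul_eq_two {f : C₀(X, ℂ)} (hf : ‖f‖ = 1) (hu : ‖u‖ = 1) {x₀ : X}
    (hux₀ : u x₀ = 1) (hfx : ‖f x₀‖ = 1) : ‖f + f x₀ • u‖ = 2 := by
  refine le_antisymm ?_ ?_
  · calc ‖f + f x₀ • u‖ ≤ ‖f‖ + ‖f x₀‖ * ‖u‖ := (norm_add_le _ _).trans_eq (by rw [norm_smul])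
      _ = 2 := by rw [hf, hfx, hu]; norm_num
  · calc (2 : ℝ) = ‖(f + f x₀ • u) x₀‖ := by
          simp only [coe_add, coe_smul, Pi.add_apply, Pi.smul_apply, smul_eq_mul, hux₀]
          rw [mul_one, ← two_mul, norm_mul, hfx]; norm_num
      _ ≤ ‖f + f x₀ • u‖ := norm_apply_le _ _

lemma norm_add_smul_lt_two {g : C₀(X, ℂ)} {c : ℂ} (hg : ‖g‖ ≤ 1) (hu : ‖u‖ ≤ 1)
    (hpeak : ∀ z, ‖u z‖ = 1 → u z = 1) (hc : ‖c‖ = 1) (hgc : ∀ z, u z = 1 → g z ≠ c) :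
    ‖g + c • u‖ < 2 := by
  refine norm_lt_of_forall_norm_apply_lt two_pos fun z => ?_
  have hgz : ‖g z‖ ≤ 1 := (norm_apply_le g z).trans hg
  have hcuz : ‖c * u z‖ ≤ 1 := by
    rw [norm_mul, hc, one_mul]; exact (norm_apply_le u z).trans hu
  have hle : ‖g z + c * u z‖ ≤ 2 := (norm_add_le _ _).trans (by linarith)
  refine hle.lt_of_ne fun heq => ?_
  obtain ⟨hgcu, hgz1⟩ := eq_and_norm_eq_one_of_norm_add_eq_two hgz hcuz heq
  have huz : u z = 1 := hpeak z (by rwa [hgcu, norm_mul, hc, one_mul] at hgz1)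
  exact hgc z huz (by rw [hgcu, huz, mul_one])

end PeakingPerturbation

theorem stmt2_general {X : Type*} [TopologicalSpace X]
    (A : NonUnitalSubalgebra ℂ C₀(X, ℂ))
    (f g : C₀(X, ℂ)) (hf : ‖f‖ = 1) (hg : ‖g‖ = 1)
    (x₀ : X) (hx₀ : InChoquet (A : Set C₀(X, ℂ)) x₀) (hfx : ‖f x₀‖ = 1)
    (hne : f x₀ ≠ g x₀) :
    ∃ h ∈ (A : Set C₀(X, ℂ)), ‖h‖ = 1 ∧ ‖f - h‖ = 2 ∧ ‖g - h‖ < 2 := by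
  set O : Set X := {z | ‖g z - g x₀‖ < ‖f x₀ - g x₀‖}
  have hO : IsOpen O := isOpen_lt ((map_continuous g).sub continuous_const).norm continuous_const
  have hx₀O : x₀ ∈ O := by simpa [O] using sub_ne_zero.mpr hne
  obtain ⟨u, ⟨huA, hu, hpeak⟩, hux₀, hsmall⟩ := hx₀ 1 one_pos O hO hx₀O
  have hgc : ∀ z, u z = 1 → g z ≠ f x₀ := fun z huz hgz => by
    have hzO : z ∈ O := by_contra fun hz => by
      have := hsmall z hz
      norm_num [huz] at this
    simp [O, hgz] at hzO
  refine ⟨-(f x₀ • u), A.neg_mem (A.smul_mem (f x₀) huA), ?_, ?_, ?_⟩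
  · rw [norm_neg, norm_smul, hfx, hu, one_mul]
  · rw [sub_neg_eq_add]
    exact norm_add_smul_eq_two hf hu hux₀ hfx
  · rw [sub_neg_eq_add]
    exact norm_add_smul_lt_two hg.le hu.le hpeak hfx hgc

theorem stmt2 {X : Type*} [TopologicalSpace X] [LocallyCompactSpace X] [T2Space X]
    (A : NonUnitalSubalgebra ℂ C₀(X, ℂ)) (hA : IsClosed (A : Set C₀(X, ℂ)))
    (hsep : StronglySeparates (A : Set C₀(X, ℂ)))
    (f g : C₀(X, ℂ)) (hfA : f ∈ A) (hgA : g ∈ A) (hf : ‖f‖ = 1) (hg : ‖g‖ = 1)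
    (x₀ : X) (hx₀ : InChoquet (A : Set C₀(X, ℂ)) x₀) (hfx : ‖f x₀‖ = 1)
    (hne : f x₀ ≠ g x₀) :
    ∃ h ∈ (A : Set C₀(X, ℂ)), ‖h‖ = 1 ∧ ‖f - h‖ = 2 ∧ ‖g - h‖ < 2 :=
  stmt2_general A f g hf hg x₀ hx₀ hfx hne
end

section
/- Let A be a uniformly closed function algebra on a locally compact Hausdorff space X, and let λ, λ' ∈ 𝕋, x, x' ∈ Ch(A). If λVₓ ⊆ λ'Vₓ', where μV_y := {f ∈ S(A) : f(y) = μ}, then λ = λ' and x = x'. -/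
open scoped ZeroAtInfty

theorem stmt4 {X : Type*} [TopologicalSpace X] [LocallyCompactSpace X] [T2Space X]
    (A : NonUnitalSubalgebra ℂ C₀(X, ℂ)) (hA : IsClosed (A : Set C₀(X, ℂ)))
    (hsep : StronglySeparates (A : Set C₀(X, ℂ)))
    (lam lam' : ℂ) (hl : ‖lam‖ = 1) (hl' : ‖lam'‖ = 1)
    (x x' : X) (hx : InChoquet (A : Set C₀(X, ℂ)) x) (hx' : InChoquet (A : Set C₀(X, ℂ)) x')
    (hsub : {f : C₀(X, ℂ) | f ∈ (A : Set C₀(X, ℂ)) ∧ ‖f‖ = 1 ∧ f x = lam} ⊆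
      {f : C₀(X, ℂ) | f ∈ (A : Set C₀(X, ℂ)) ∧ ‖f‖ = 1 ∧ f x' = lam'}) :
    lam = lam' ∧ x = x' := by
  have hlam0 : lam ≠ 0 := by
    intro h; rw [h, norm_zero] at hl; norm_num at hl
  -- generic step: given a peaking u with u x = 1, lam • u lies in the LHS set
  have key : ∀ u : C₀(X, ℂ), IsPeaking (A : Set C₀(X, ℂ)) u → u x = 1 →
      lam * u x' = lam' := by
    intro u hu hux
    obtain ⟨huA, hun, hupk⟩ := hu
    have hmem : (lam • u) ∈ {f : C₀(X, ℂ) | f ∈ (A : Set C₀(X, ℂ)) ∧ ‖f‖ = 1 ∧ f x = lam} := by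
      refine ⟨A.smul_mem lam huA, ?_, ?_⟩
      · rw [norm_smul lam u, hl, hun, one_mul]
      · simp [hux]
    have := hsub hmem
    simpa using this.2.2
  have hxx : x = x' := by
    by_contra hne
    obtain ⟨u, hu, hux, hsmall⟩ := hx (1/2) (by norm_num) ({x'}ᶜ) (isOpen_compl_singleton)
      (by simpa using hne)
    have h1 : lam * u x' = lam' := key u hu hux
    have h2 : ‖u x'‖ < 1/2 := hsmall x' (by simp)
    have : ‖lam * u x'‖ = 1 := by rw [h1, hl']
    rw [norm_mul, hl, one_mul] at this
    linarith
  have hll : lam = lam' := by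
    obtain ⟨u, hu, hux, -⟩ := hx 1 (by norm_num) Set.univ isOpen_univ (Set.mem_univ x)
    have h1 : lam * u x' = lam' := key u hu hux
    have hnorm : ‖u x'‖ = 1 := by
      have : ‖lam * u x'‖ = 1 := by rw [h1, hl']
      rwa [norm_mul, hl, one_mul] at this
    have := hu.2.2 x' hnorm
    rw [this, mul_one] at h1
    exact h1
  exact ⟨hll, hxx⟩
end

section
/- Let B be a uniformly closed function algebra on a locally compact Hausdorff space Y, y, y' ∈ Ch(B) with y ≠ y', and μ, μ' ∈ 𝕋. Then there exist u, v ∈ S(B) with u(y) = μ, v(y') = μ', |u(z)| = 1 ⟹ u(z) = μ, |v(z)| = 1 ⟹ v(z) = μ', and ‖u − v‖ < √2. -/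
open scoped ZeroAtInfty

theorem stmt5 {Y : Type*} [TopologicalSpace Y] [LocallyCompactSpace Y] [T2Space Y]
    (B : NonUnitalSubalgebra ℂ C₀(Y, ℂ)) (hB : IsClosed (B : Set C₀(Y, ℂ)))
    (hsep : StronglySeparates (B : Set C₀(Y, ℂ)))
    (y y' : Y) (hy : InChoquet (B : Set C₀(Y, ℂ)) y) (hy' : InChoquet (B : Set C₀(Y, ℂ)) y')
    (hne : y ≠ y') (μ μ' : ℂ) (hμ : ‖μ‖ = 1) (hμ' : ‖μ'‖ = 1) :
    ∃ u ∈ (B : Set C₀(Y, ℂ)), ∃ v ∈ (B : Set C₀(Y, ℂ)),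
      ‖u‖ = 1 ∧ ‖v‖ = 1 ∧ u y = μ ∧ v y' = μ' ∧
      (∀ z, ‖u z‖ = 1 → u z = μ) ∧ (∀ z, ‖v z‖ = 1 → v z = μ') ∧
      ‖u - v‖ < Real.sqrt 2 := by
  obtain ⟨O, O', hO, hO', hyO, hyO', hdisj⟩ := t2_separation hne
  obtain ⟨w, ⟨hwB, hwn, hwpk⟩, hwy, hwsm⟩ := hy (2/5) (by norm_num) O hO hyO
  obtain ⟨w', ⟨hwB', hwn', hwpk'⟩, hwy', hwsm'⟩ := hy' (2/5) (by norm_num) O' hO' hyO'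
  refine ⟨μ • w, SMulMemClass.smul_mem μ hwB, μ' • w', SMulMemClass.smul_mem μ' hwB', ?_, ?_,
    ?_, ?_, ?_, ?_, ?_⟩
  · rw [norm_smul μ w, hμ, hwn, one_mul]
  · rw [norm_smul μ' w', hμ', hwn', one_mul]
  · show μ • w y = μ; rw [hwy, smul_eq_mul, mul_one]
  · show μ' • w' y' = μ'; rw [hwy', smul_eq_mul, mul_one]
  · intro z hz
    show μ • w z = μ
    have : ‖w z‖ = 1 := by
      have := hz
      rwa [ZeroAtInftyContinuousMap.smul_apply, norm_smul, hμ, one_mul] at this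
    rw [hwpk z this, smul_eq_mul, mul_one]
  · intro z hz
    show μ' • w' z = μ'
    have : ‖w' z‖ = 1 := by
      have := hz
      rwa [ZeroAtInftyContinuousMap.smul_apply, norm_smul, hμ', one_mul] at this
    rw [hwpk' z this, smul_eq_mul, mul_one]
  · have hb : ‖μ • w - μ' • w'‖ ≤ 7/5 := by
      rw [← ZeroAtInftyContinuousMap.norm_toBCF_eq_norm]
      apply BoundedContinuousFunction.norm_le (by norm_num) |>.mpr
      intro z
      have hz : ((μ • w - μ' • w').toBCF) z = μ • w z - μ' • w' z := rfl
      rw [hz]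
      have h1 : ‖w z‖ ≤ 1 := by
        calc ‖w z‖ = ‖w.toBCF z‖ := rfl
          _ ≤ ‖w.toBCF‖ := w.toBCF.norm_coe_le_norm z
          _ = 1 := by rw [ZeroAtInftyContinuousMap.norm_toBCF_eq_norm, hwn]
      have h1' : ‖w' z‖ ≤ 1 := by
        calc ‖w' z‖ = ‖w'.toBCF z‖ := rfl
          _ ≤ ‖w'.toBCF‖ := w'.toBCF.norm_coe_le_norm z
          _ = 1 := by rw [ZeroAtInftyContinuousMap.norm_toBCF_eq_norm, hwn']
      have key : ‖w z‖ + ‖w' z‖ ≤ 7/5 := by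
        by_cases hzO : z ∈ O
        · have : z ∉ O' := fun hz' => (Set.disjoint_left.mp hdisj hzO) hz'
          have := hwsm' z this
          linarith
        · have := hwsm z hzO
          linarith
      calc ‖μ • w z - μ' • w' z‖ ≤ ‖μ • w z‖ + ‖μ' • w' z‖ := norm_sub_le _ _
        _ = ‖w z‖ + ‖w' z‖ := by rw [norm_smul μ (w z), norm_smul μ' (w' z), hμ, hμ', one_mul, one_mul]
        _ ≤ 7/5 := key
    refine lt_of_le_of_lt hb ?_
    have : (7/5 : ℝ) < Real.sqrt 2 := by
      rw [show (7/5 : ℝ) = Real.sqrt ((7/5)^2) by rw [Real.sqrt_sq (by norm_num)]]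
      apply Real.sqrt_lt_sqrt (by positivity)
      norm_num
    exact this
end

section
/- Let A be a uniformly closed function algebra on a locally compact Hausdorff space X, f ∈ A with ‖f‖ = 1, and x₀ ∈ Ch(A) with |f(x₀)| < 1. Set λ = f(x₀)/|f(x₀)| if f(x₀) ≠ 0 and λ = 1 otherwise. Then for each r ∈ (0,1) there exists g ∈ A with ‖g‖ = 1, g(x₀) = 1, such that h := r·f + (1 − r|f(x₀)|)·λ·g satisfies ‖h‖ = 1 and h(x₀) = λ. -/
/-!
With `κ = 1 - r‖f x₀‖` and `ε = (1 - r) / κ`, take peaking functions `uₙ` at `x₀` with `|uₙ| < ε`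
off the open level set `Oₙ = {r|f| + κ (1 - (1 - ε) 2^-(n+1)) < 1}` and put `g = ∑ 2^-(n+1) uₙ`.
Outside all `Oₙ` with `n ≥ N` the tail of the series is small, so `|g| ≤ 1 - (1 - ε) 2^-N`;
taking `N` to be the first level a point leaves, this is exactly the room `r|f|` leaves there,
so `r|f| + κ|g| ≤ 1` everywhere. Hence `‖h‖ ≤ 1`, while `h x₀ = λ` has modulus one.
-/

open scoped ZeroAtInfty

open Finset Filter Topology

theorem hasSum_half_pow_succ : HasSum (fun n : ℕ => (1 / 2 : ℝ) ^ (n + 1)) 1 := by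
  simpa [pow_succ', mul_comm] using hasSum_geometric_two.mul_left (1 / 2 : ℝ)

theorem norm_tsum_half_pow_smul_le {E : Type*} [SeminormedAddCommGroup E] [NormedSpace ℝ E]
    {w : ℕ → E} {ε : ℝ} (N : ℕ) (hw : ∀ n, ‖w n‖ ≤ 1) (hwN : ∀ n, N ≤ n → ‖w n‖ ≤ ε) :
    ‖∑' n, (1 / 2 : ℝ) ^ (n + 1) • w n‖ ≤ 1 - (1 - ε) * (1 / 2) ^ N := by
  have hterm : ∀ n, ‖(1 / 2 : ℝ) ^ (n + 1) • w n‖ = (1 / 2) ^ (n + 1) * ‖w n‖ := fun n => by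
    rw [norm_smul, Real.norm_of_nonneg (by positivity)]
  have htail : HasSum (fun n : ℕ => (1 / 2 : ℝ) ^ (n + N + 1)) ((1 / 2) ^ N) := by
    simpa [pow_add, mul_assoc, mul_comm, mul_left_comm] using
      hasSum_half_pow_succ.mul_left ((1 / 2 : ℝ) ^ N)
  have hhead : ∑ n ∈ range N, (1 / 2 : ℝ) ^ (n + 1) = 1 - (1 / 2) ^ N := by
    have hsplit := hasSum_half_pow_succ.summable.sum_add_tsum_nat_add N
    rw [htail.tsum_eq, hasSum_half_pow_succ.tsum_eq] at hsplit
    linarith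
  have hnorm : Summable fun n => ‖(1 / 2 : ℝ) ^ (n + 1) • w n‖ :=
    hasSum_half_pow_succ.summable.of_nonneg_of_le (fun _ => norm_nonneg _) fun n => by
      rw [hterm]; exact mul_le_of_le_one_right (by positivity) (hw n)
  calc ‖∑' n, (1 / 2 : ℝ) ^ (n + 1) • w n‖
      ≤ ∑' n, ‖(1 / 2 : ℝ) ^ (n + 1) • w n‖ := norm_tsum_le_tsum_norm hnorm
    _ = ∑ n ∈ range N, ‖(1 / 2 : ℝ) ^ (n + 1) • w n‖
          + ∑' n, ‖(1 / 2 : ℝ) ^ (n + N + 1) • w (n + N)‖ :=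
        (hnorm.sum_add_tsum_nat_add N).symm
    _ ≤ ∑ n ∈ range N, (1 / 2 : ℝ) ^ (n + 1) + ∑' n, ε * (1 / 2) ^ (n + N + 1) := by
        gcongr with n _ n
        · rw [hterm]; exact mul_le_of_le_one_right (by positivity) (hw n)
        · exact (summable_nat_add_iff N).2 hnorm
        · exact (htail.mul_left ε).summable
        · rw [hterm, mul_comm]; gcongr; exact hwN _ (Nat.le_add_left N n)
    _ = 1 - (1 - ε) * (1 / 2) ^ N := by rw [hhead, (htail.mul_left ε).tsum_eq]; ring

namespace ZeroAtInftyContinuousMap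

variable {α β : Type*} [TopologicalSpace α] [SeminormedAddCommGroup β]

theorem norm_apply_le_s6 (f : C₀(α, β)) (x : α) : ‖f x‖ ≤ ‖f‖ :=
  f.toBCF.norm_coe_le_norm x

theorem norm_le (f : C₀(α, β)) {C : ℝ} (hC : 0 ≤ C) : ‖f‖ ≤ C ↔ ∀ x, ‖f x‖ ≤ C :=
  BoundedContinuousFunction.norm_le (f := f.toBCF) hC

def evalAddMonoidHom (x : α) : C₀(α, β) →+ β where
  toFun f := f x
  map_zero' := rfl
  map_add' _ _ := rfl

theorem continuous_evalAddMonoidHom (x : α) : Continuous (evalAddMonoidHom (β := β) x) :=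
  AddMonoidHomClass.continuous_of_bound _ 1 fun f => by
    rw [one_mul]; exact norm_apply_le_s6 f x

theorem tsum_apply [T2Space β] {ι : Type*} {f : ι → C₀(α, β)} (hf : Summable f) (x : α) :
    (∑' i, f i) x = ∑' i, f i x :=
  (hf.hasSum.map (evalAddMonoidHom x) (continuous_evalAddMonoidHom x)).tsum_eq.symm

end ZeroAtInftyContinuousMap

open ZeroAtInftyContinuousMap

theorem InChoquet.exists_apply_eq_one_norm_apply_le {X : Type*} [TopologicalSpace X]
    {A : Submodule ℝ C₀(X, ℂ)} (hA : IsClosed (A : Set C₀(X, ℂ))) {x : X}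
    (hx : InChoquet (A : Set C₀(X, ℂ)) x) {ε : ℝ} (hε : 0 < ε) {O : ℕ → Set X}
    (hO : ∀ n, IsOpen (O n)) (hxO : ∀ n, x ∈ O n) :
    ∃ g ∈ A, g x = 1 ∧ ‖g‖ = 1 ∧
      ∀ N z, (∀ n, N ≤ n → z ∉ O n) → ‖g z‖ ≤ 1 - (1 - ε) * (1 / 2) ^ N := by
  choose u hu hux hus using fun n => hx ε hε (O n) (hO n) (hxO n)
  have hsum : Summable fun n => (1 / 2 : ℝ) ^ (n + 1) • u n :=
    hasSum_half_pow_succ.summable.of_norm_bounded fun n => by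
      rw [norm_smul, (hu n).2.1, mul_one, Real.norm_of_nonneg (by positivity)]
  set g := ∑' n, (1 / 2 : ℝ) ^ (n + 1) • u n
  have hg_apply (z : X) : g z = ∑' n, (1 / 2 : ℝ) ^ (n + 1) • u n z := tsum_apply hsum z
  have hgx : g x = 1 := by
    simpa [hg_apply, hux] using (hasSum_half_pow_succ.smul_const (1 : ℂ)).tsum_eq
  have hg_le : ‖g‖ ≤ 1 := by
    have := norm_tsum_half_pow_smul_le (ε := 1) 0 (fun n => (hu n).2.1.le) fun n _ =>
      (hu n).2.1.le
    rwa [sub_self, zero_mul, sub_zero] at this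
  refine ⟨g, tsum_mem hA fun n => A.smul_mem _ (hu n).1, hgx,
    le_antisymm hg_le (by simpa [hgx] using norm_apply_le_s6 g x), fun N z hz => ?_⟩
  rw [hg_apply]
  exact norm_tsum_half_pow_smul_le N (fun n => (norm_apply_le_s6 _ z).trans (hu n).2.1.le)
    fun n hn => (hus n z (hz n hn)).le

theorem add_mul_le_one_of_levels {F G c ε : ℝ} (hc : 0 ≤ c) (hε : ε ≤ 1) (hG : G ≤ 1)
    (hFε : F + c * ε ≤ 1)
    (hlevel : ∀ N, (∀ n, N ≤ n → 1 ≤ F + c * (1 - (1 - ε) * (1 / 2) ^ (n + 1))) →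
      G ≤ 1 - (1 - ε) * (1 / 2) ^ N) :
    F + c * G ≤ 1 := by
  by_cases hex : ∃ N, 1 ≤ F + c * (1 - (1 - ε) * (1 / 2) ^ (N + 1))
  · obtain ⟨N, hN, hmin⟩ : ∃ N, 1 ≤ F + c * (1 - (1 - ε) * (1 / 2) ^ (N + 1)) ∧
        ∀ K < N, ¬ 1 ≤ F + c * (1 - (1 - ε) * (1 / 2) ^ (K + 1)) :=
      ⟨Nat.find hex, Nat.find_spec hex, fun K => Nat.find_min hex⟩
    have hGN : G ≤ 1 - (1 - ε) * (1 / 2) ^ N := hlevel N fun n hn => hN.trans (by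
      have : 0 ≤ 1 - ε := sub_nonneg.2 hε
      gcongr F + c * (1 - (1 - ε) * ?_)
      exact pow_le_pow_of_le_one (by norm_num) (by norm_num) (by omega))
    rcases N with _ | K
    · nlinarith
    · nlinarith [hmin K K.lt_succ_self]
  · push Not at hex
    have hlim : Tendsto (fun N : ℕ => F + c * (1 - (1 - ε) * (1 / 2) ^ (N + 1))) atTop
        (𝓝 (F + c * (1 - (1 - ε) * 0))) :=
      ((tendsto_pow_atTop_nhds_zero_of_lt_one (by norm_num) (by norm_num)).comp
        (tendsto_add_atTop_nat 1)).const_mul _ |>.const_sub _ |>.const_mul _ |>.const_add _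
    have hFc : F + c ≤ 1 := by
      simpa using le_of_tendsto' hlim fun N => (hex N).le
    nlinarith

theorem Complex.norm_ite_div_norm (w : ℂ) : ‖if w = 0 then 1 else w / (‖w‖ : ℂ)‖ = 1 := by
  split_ifs with hw
  · exact norm_one
  · rw [norm_div, Complex.norm_real, norm_norm, div_self (norm_ne_zero_iff.2 hw)]

theorem Complex.norm_mul_ite_div_norm (w : ℂ) :
    (‖w‖ : ℂ) * (if w = 0 then 1 else w / (‖w‖ : ℂ)) = w := by
  split_ifs with hw
  · simp [hw]
  · exact mul_div_cancel₀ w (Complex.ofReal_ne_zero.2 (norm_ne_zero_iff.2 hw))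

theorem InChoquet.exists_norm_add_mul_norm_le_one {X : Type*} [TopologicalSpace X]
    {A : Submodule ℝ C₀(X, ℂ)} (hA : IsClosed (A : Set C₀(X, ℂ))) {x₀ : X}
    (hx₀ : InChoquet (A : Set C₀(X, ℂ)) x₀) {f : C₀(X, ℂ)} (hf : ‖f‖ ≤ 1) (hlt : ‖f x₀‖ < 1)
    {r : ℝ} (hr0 : 0 < r) (hr1 : r < 1) :
    ∃ g ∈ A, g x₀ = 1 ∧ ‖g‖ = 1 ∧ ∀ z, r * ‖f z‖ + (1 - r * ‖f x₀‖) * ‖g z‖ ≤ 1 := by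
  set κ := 1 - r * ‖f x₀‖
  have hκ : 0 < κ := by nlinarith [norm_nonneg (f x₀)]
  set ε := (1 - r) / κ
  have hκε : κ * ε = 1 - r := mul_div_cancel₀ _ hκ.ne'
  have hε : 0 < ε := div_pos (by linarith) hκ
  have hε1 : ε < 1 := (div_lt_one hκ).2 (by nlinarith)
  obtain ⟨g, hgA, hgx₀, hg, hlevel⟩ := hx₀.exists_apply_eq_one_norm_apply_le hA hε
    (O := fun n => {z | r * ‖f z‖ + κ * (1 - (1 - ε) * (1 / 2) ^ (n + 1)) < 1})
    (fun n => isOpen_lt (by fun_prop) continuous_const)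
    fun n => by
      have : 0 < κ * ((1 - ε) * (1 / 2) ^ (n + 1)) := by
        have := sub_pos.2 hε1; positivity
      show r * ‖f x₀‖ + κ * (1 - (1 - ε) * (1 / 2) ^ (n + 1)) < 1
      linarith [show κ = 1 - r * ‖f x₀‖ from rfl]
  refine ⟨g, hgA, hgx₀, hg, fun z => ?_⟩
  exact add_mul_le_one_of_levels hκ.le hε1.le ((norm_apply_le_s6 g z).trans hg.le)
    (by nlinarith [(norm_apply_le_s6 f z).trans hf]) fun N hN =>
      hlevel N z fun n hn => by simpa using hN n hn

theorem stmt6_general {X : Type*} [TopologicalSpace X]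
    (A : NonUnitalSubalgebra ℂ C₀(X, ℂ)) (hA : IsClosed (A : Set C₀(X, ℂ)))
    (f : C₀(X, ℂ)) (hf : ‖f‖ = 1)
    (x₀ : X) (hx₀ : InChoquet (A : Set C₀(X, ℂ)) x₀) (hlt : ‖f x₀‖ < 1)
    (lam : ℂ) (hlam : lam = if f x₀ = 0 then 1 else f x₀ / (‖f x₀‖ : ℂ)) :
    ∀ r : ℝ, 0 < r → r < 1 →
      ∃ g ∈ (A : Set C₀(X, ℂ)), ‖g‖ = 1 ∧ g x₀ = 1 ∧
        ‖(r : ℂ) • f + (((1 - r * ‖f x₀‖ : ℝ) : ℂ) * lam) • g‖ = 1 ∧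
        ((r : ℂ) • f + (((1 - r * ‖f x₀‖ : ℝ) : ℂ) * lam) • g) x₀ = lam := by
  intro r hr0 hr1
  obtain ⟨g, hgA, hgx₀, hg, hbound⟩ := InChoquet.exists_norm_add_mul_norm_le_one
    (A := A.toSubmodule.restrictScalars ℝ) hA hx₀ hf.le hlt hr0 hr1
  set κ := 1 - r * ‖f x₀‖
  have hκ : 0 < κ := by nlinarith [norm_nonneg (f x₀)]
  have hh_apply (z : X) : ((r : ℂ) • f + ((κ : ℂ) * lam) • g) z = r * f z + κ * lam * g z := rfl
  have hhx₀ : ((r : ℂ) • f + ((κ : ℂ) * lam) • g) x₀ = lam := by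
    rw [hh_apply, hgx₀, ← Complex.norm_mul_ite_div_norm (f x₀), ← hlam]
    push_cast [κ]; ring
  have hlam1 : ‖lam‖ = 1 := hlam ▸ Complex.norm_ite_div_norm _
  refine ⟨g, hgA, hg, hgx₀, le_antisymm ?_ ?_, hhx₀⟩
  · refine (norm_le _ zero_le_one).2 fun z => ?_
    rw [hh_apply]
    refine (norm_add_le _ _).trans (le_of_eq_of_le ?_ (hbound z))
    simp [hlam1, abs_of_pos hr0, abs_of_pos hκ]
  · simpa [hhx₀, hlam1] using norm_apply_le_s6 ((r : ℂ) • f + ((κ : ℂ) * lam) • g) x₀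

theorem stmt6 {X : Type*} [TopologicalSpace X] [LocallyCompactSpace X] [T2Space X]
    (A : NonUnitalSubalgebra ℂ C₀(X, ℂ)) (hA : IsClosed (A : Set C₀(X, ℂ)))
    (hsep : StronglySeparates (A : Set C₀(X, ℂ)))
    (f : C₀(X, ℂ)) (hfA : f ∈ A) (hf : ‖f‖ = 1)
    (x₀ : X) (hx₀ : InChoquet (A : Set C₀(X, ℂ)) x₀) (hlt : ‖f x₀‖ < 1)
    (lam : ℂ) (hlam : lam = if f x₀ = 0 then 1 else f x₀ / (‖f x₀‖ : ℂ)) :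
    ∀ r : ℝ, 0 < r → r < 1 →
      ∃ g ∈ (A : Set C₀(X, ℂ)), ‖g‖ = 1 ∧ g x₀ = 1 ∧
        ‖(r : ℂ) • f + (((1 - r * ‖f x₀‖ : ℝ) : ℂ) * lam) • g‖ = 1 ∧
        ((r : ℂ) • f + (((1 - r * ‖f x₀‖ : ℝ) : ℂ) * lam) • g) x₀ = lam :=
  stmt6_general A hA f hf x₀ hx₀ hlt lam hlam
end

section
/- Let E and F be complex Banach spaces, let D ⊆ S(E) be a norming set of points for evaluation in the following sense: there is a family of functionals {φ_d}_{d∈D} ⊆ B_{E*} with ‖x‖ = sup_{d∈D} |φ_d(x)| for all x ∈ E, and analogously a norming family {ψ_d}_{d∈D} for F. Suppose Δ : S(E) → S(F) is a surjective isometry such that ψ_d(Δ(x)) equals either φ_d(x) for all x ∈ S(E), or conj(φ_d(x)) for all x ∈ S(E) (the alternative depending only on d). Then the positive homogeneous extension T of Δ, defined by T(x) = ‖x‖ Δ(x/‖x‖) for x ≠ 0 and T(0) = 0, is a surjective real-linear isometry from E onto F extending Δ. -/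
theorem stmt8 {E F : Type*} [NormedAddCommGroup E] [NormedSpace ℂ E] [CompleteSpace E]
    [NormedAddCommGroup F] [NormedSpace ℂ F] [CompleteSpace F]
    {D : Type*} (φ : D → (E →L[ℂ] ℂ)) (ψ : D → (F →L[ℂ] ℂ))
    (hφ : ∀ d, ‖φ d‖ ≤ 1) (hψ : ∀ d, ‖ψ d‖ ≤ 1)
    (hφn : ∀ x : E, ‖x‖ = ⨆ d, ‖φ d x‖) (hψn : ∀ y : F, ‖y‖ = ⨆ d, ‖ψ d y‖)
    (Δ : E → F) (hmaps : ∀ x : E, ‖x‖ = 1 → ‖Δ x‖ = 1)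
    (hsurj : ∀ y : F, ‖y‖ = 1 → ∃ x : E, ‖x‖ = 1 ∧ Δ x = y)
    (hiso : ∀ x y : E, ‖x‖ = 1 → ‖y‖ = 1 → ‖Δ x - Δ y‖ = ‖x - y‖)
    (halt : ∀ d, (∀ x : E, ‖x‖ = 1 → ψ d (Δ x) = φ d x) ∨
      (∀ x : E, ‖x‖ = 1 → ψ d (Δ x) = starRingEnd ℂ (φ d x))) :
    ∃ T : E ≃ₗᵢ[ℝ] F, (∀ x : E, ‖x‖ = 1 → T x = Δ x) ∧
      (T 0 = 0) ∧ ∀ x : E, x ≠ 0 → (T x : F) = ‖x‖ • Δ (‖x‖⁻¹ • x) := by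
  classical
  set T : E → F := fun x => if x = 0 then 0 else ‖x‖ • Δ (‖x‖⁻¹ • x) with hT
  have hT0 : T 0 = 0 := by simp [hT]
  have hTne : ∀ x : E, x ≠ 0 → T x = ‖x‖ • Δ (‖x‖⁻¹ • x) := fun x hx => by
    simp [hT, hx]
  have hnorm1 : ∀ x : E, x ≠ 0 → ‖(‖x‖⁻¹ : ℝ) • x‖ = 1 := by
    intro x hx
    rw [norm_smul, norm_inv, norm_norm]
    exact inv_mul_cancel₀ (norm_ne_zero_iff.mpr hx)
  have hzero : ∀ y : F, (∀ d, ψ d y = 0) → y = 0 := by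
    intro y hy
    have h0 : ‖y‖ = 0 := by
      rw [hψn y]
      have he : ∀ d, ‖ψ d y‖ = 0 := fun d => by simp [hy d]
      simp only [he]
      cases isEmpty_or_nonempty D
      · exact Real.iSup_of_isEmpty _
      · exact ciSup_const
    simpa using h0
  have hkey : ∀ d, (∀ x : E, ψ d (T x) = φ d x) ∨
      (∀ x : E, ψ d (T x) = starRingEnd ℂ (φ d x)) := by
    intro d
    rcases halt d with h | h
    · left
      intro x
      by_cases hx : x = 0
      · simp [hx, hT0]
      · rw [hTne x hx, ContinuousLinearMap.map_smul_of_tower, h _ (hnorm1 x hx),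
          ← ContinuousLinearMap.map_smul_of_tower (φ d), smul_inv_smul₀ (norm_ne_zero_iff.mpr hx)]
    · right
      intro x
      by_cases hx : x = 0
      · simp [hx, hT0]
      · rw [hTne x hx, ContinuousLinearMap.map_smul_of_tower, h _ (hnorm1 x hx)]
        have h2 : φ d x = ‖x‖ • φ d (‖x‖⁻¹ • x) := by
          rw [← ContinuousLinearMap.map_smul_of_tower (φ d), smul_inv_smul₀ (norm_ne_zero_iff.mpr hx)]
        rw [h2]
        simp [Complex.real_smul, map_mul, Complex.conj_ofReal]
  have hadd : ∀ x y : E, T (x + y) = T x + T y := by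
    intro x y
    have h0 : T (x + y) - (T x + T y) = 0 := by
      apply hzero
      intro d
      rcases hkey d with h | h <;> simp [map_sub, map_add, h]
    rw [sub_eq_zero] at h0; exact h0
  have hsmul : ∀ (r : ℝ) (x : E), T (r • x) = r • T x := by
    intro r x
    have h0 : T (r • x) - r • T x = 0 := by
      apply hzero
      intro d
      rcases hkey d with h | h <;>
        simp [map_sub, ContinuousLinearMap.map_smul_of_tower, h, Complex.real_smul, map_mul,
          Complex.conj_ofReal]
    rw [sub_eq_zero] at h0; exact h0
  have hnorm : ∀ x : E, ‖T x‖ = ‖x‖ := by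
    intro x
    by_cases hx : x = 0
    · simp [hx, hT0]
    · rw [hTne x hx, norm_smul, hmaps _ (hnorm1 x hx), norm_norm, mul_one]
  have hsurjT : Function.Surjective T := by
    intro y
    by_cases hy : y = 0
    · exact ⟨0, by simp [hT0, hy]⟩
    · have hyn : ‖y‖ ≠ 0 := norm_ne_zero_iff.mpr hy
      obtain ⟨x, hx1, hΔ⟩ := hsurj (‖y‖⁻¹ • y) (by
        rw [norm_smul, norm_inv, norm_norm]; exact inv_mul_cancel₀ hyn)
      have hxne : x ≠ 0 := by
        intro h; rw [h] at hx1; simp at hx1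
      refine ⟨‖y‖ • x, ?_⟩
      have hne : (‖y‖ : ℝ) • x ≠ 0 := smul_ne_zero hyn hxne
      rw [hTne _ hne]
      have hn : ‖(‖y‖ : ℝ) • x‖ = ‖y‖ := by
        rw [norm_smul, norm_norm, hx1, mul_one]
      rw [hn]
      have : (‖y‖ : ℝ)⁻¹ • (‖y‖ : ℝ) • x = x := inv_smul_smul₀ hyn x
      rw [this, hΔ, smul_inv_smul₀ hyn]
  let L : E →ₗ[ℝ] F :=
    { toFun := T, map_add' := hadd, map_smul' := hsmul }
  let Li : E →ₗᵢ[ℝ] F := ⟨L, hnorm⟩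
  refine ⟨LinearIsometryEquiv.ofSurjective Li hsurjT, ?_, ?_, ?_⟩
  · intro x hx
    show T x = Δ x
    have hxne : x ≠ 0 := by intro h; rw [h] at hx; simp at hx
    rw [hTne x hxne, hx]
    simp
  · show T 0 = 0
    exact hT0
  · intro x hx
    show T x = ‖x‖ • Δ (‖x‖⁻¹ • x)
    exact hTne x hx
end

section
/- Let X be a locally compact Hausdorff space with a continuous 𝕋-action, t₀ ∈ X with 𝕋t₀ ∩ {t₀} = {t₀} under the action (i.e. λt₀ = t₀ only for λ = 1), and W a 𝕋-invariant open neighbourhood of t₀ contained in a compact 𝕋-invariant set. Then there exists h ∈ C₀^𝕋(X) with ‖h‖ = 1, h(t₀) = 1 and h(t) = 0 for all t ∈ X∖W. -/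
/-!
Extend λ • t₀ ↦ λ (well defined since the orbit map is injective) by Tietze to a function
into the closed unit disc, and cut it off with an Urysohn function that is 1 on the orbit and
vanishes off `W`. Averaging against the Haar probability measure, `∫ λ⁻¹ v(λ • t) dλ`, makes
the result equivariant without changing it on the orbit, where it already is equivariant; the
average is still bounded by 1 and vanishes off the invariant set `W`, so its support lies in `K`.
-/

open scoped ZeroAtInfty
open MeasureTheory

noncomputable instance : MeasurableSpace Circle := borel Circle
instance : BorelSpace Circle := ⟨rfl⟩

section ParametricIntegral

variable {X Y E : Type*} [TopologicalSpace X] [TopologicalSpace Y] [CompactSpace Y]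
  [MeasurableSpace Y] [OpensMeasurableSpace Y] [NormedAddCommGroup E] [NormedSpace ℝ E]
  (μ : Measure Y) [IsFiniteMeasure μ]

theorem ContinuousMap.lipschitzWith_integral :
    LipschitzWith (μ Set.univ).toNNReal fun f : C(Y, E) => ∫ y, f y ∂μ := by
  refine LipschitzWith.of_dist_le_mul fun f g => ?_
  have hint (f : C(Y, E)) : Integrable f μ :=
    f.continuous.integrable_of_hasCompactSupport (.of_compactSpace _)
  rw [dist_eq_norm, ← integral_sub (hint f) (hint g), mul_comm]
  exact norm_integral_le_of_norm_le_const
    (.of_forall fun y => (ContinuousMap.dist_apply_le_dist y).trans_eq' (dist_eq_norm _ _))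

theorem continuous_integral_of_continuous_uncurry {F : X → Y → E} (hF : Continuous F.uncurry) :
    Continuous fun x => ∫ y, F x y ∂μ :=
  (ContinuousMap.lipschitzWith_integral μ).continuous.comp
    (ContinuousMap.curry ⟨_, hF⟩).continuous

end ParametricIntegral

section EquivariantAverage

variable {X : Type*} [TopologicalSpace X] [MulAction Circle X] [ContinuousSMul Circle X]
  (μ : Measure Circle) [IsFiniteMeasure μ]

noncomputable def equivariantAverage (f : C(X, ℂ)) : C(X, ℂ) where
  toFun t := ∫ l, ((l⁻¹ : Circle) : ℂ) * f (l • t) ∂μ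
  continuous_toFun := continuous_integral_of_continuous_uncurry μ (by fun_prop)

theorem equivariantAverage_apply (f : C(X, ℂ)) (t : X) :
    equivariantAverage μ f t = ∫ l, ((l⁻¹ : Circle) : ℂ) * f (l • t) ∂μ :=
  rfl

theorem equivariantAverage_smul [μ.IsMulRightInvariant] (f : C(X, ℂ)) (l : Circle) (t : X) :
    equivariantAverage μ f (l • t) = l * equivariantAverage μ f t := by
  simp only [equivariantAverage_apply]
  rw [← integral_const_mul, ← integral_mul_right_eq_self _ l⁻¹]
  congr 1 with k
  simp only [mul_smul, inv_smul_smul, mul_inv_rev, inv_inv, Circle.coe_mul, mul_assoc]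

theorem equivariantAverage_apply_of_forall_smul [IsProbabilityMeasure μ] {f : C(X, ℂ)} {t : X}
    (hf : ∀ l : Circle, f (l • t) = l * f t) : equivariantAverage μ f t = f t := by
  simp [equivariantAverage_apply, hf]

theorem norm_equivariantAverage_le [IsProbabilityMeasure μ] {f : C(X, ℂ)} {C : ℝ}
    (hf : ∀ t, ‖f t‖ ≤ C) (t : X) : ‖equivariantAverage μ f t‖ ≤ C := by
  simpa [equivariantAverage_apply] using norm_integral_le_of_norm_le_const (μ := μ)
    (.of_forall fun l => by simpa [Circle.norm_coe] using hf (l • t))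

theorem equivariantAverage_eq_zero {f : C(X, ℂ)} {t : X} (hf : ∀ l : Circle, f (l • t) = 0) :
    equivariantAverage μ f t = 0 := by
  simp [equivariantAverage_apply, hf]

end EquivariantAverage

section OrbitBump

variable {X : Type*} [TopologicalSpace X] [LocallyCompactSpace X] [T2Space X]
  [MulAction Circle X] [ContinuousSMul Circle X] {t₀ : X}

theorem exists_orbit_extension_norm_le_one (hfree : ∀ l : Circle, l • t₀ = t₀ → l = 1) :
    ∃ g : C(X, ℂ), (∀ l : Circle, g (l • t₀) = l) ∧ ∀ t, ‖g t‖ ≤ 1 := by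
  -- Tietze's theorem needs a normal space, so extend on the one-point compactification.
  let orbit : Circle → OnePoint X := fun l => ↑(l • t₀)
  have hinj : Function.Injective orbit := by
    intro a b hab
    have := hfree (b⁻¹ * a) (by rw [mul_smul, OnePoint.coe_injective hab, inv_smul_smul])
    exact (inv_mul_eq_one.mp this).symm
  have hemb : Topology.IsClosedEmbedding orbit :=
    (OnePoint.continuous_coe.comp (continuous_id.smul continuous_const)).isClosedEmbedding hinj
  obtain ⟨G, hG_mem, hG⟩ := ContinuousMap.exists_extension_forall_mem hemb
    ⟨fun l : Circle => (l : ℂ), continuous_subtype_val⟩ (t := Metric.closedBall 0 1)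
    fun l => mem_closedBall_zero_iff.mpr (Circle.norm_coe l).le
  exact ⟨G.comp ⟨_, OnePoint.continuous_coe⟩, fun l => congr($hG l),
    fun t => by simpa using hG_mem t⟩

theorem exists_orbit_bump (hfree : ∀ l : Circle, l • t₀ = t₀ → l = 1) {W : Set X}
    (hW : IsOpen W) (horbit : ∀ l : Circle, l • t₀ ∈ W) :
    ∃ v : C(X, ℂ), (∀ l : Circle, v (l • t₀) = l) ∧ (∀ t, ‖v t‖ ≤ 1) ∧ ∀ t ∉ W, v t = 0 := by
  obtain ⟨g, hg_orbit, hg_le⟩ := exists_orbit_extension_norm_le_one hfree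
  obtain ⟨u, hu_orbit, hu_W, -, hu_mem⟩ := exists_continuous_one_zero_of_isCompact
    (isCompact_range (f := fun l : Circle => l • t₀) (by fun_prop))
    hW.isClosed_compl (Set.disjoint_compl_right_iff_subset.mpr (Set.range_subset_iff.mpr horbit))
  refine ⟨⟨fun t => u t * g t, by fun_prop⟩, fun l => ?_, fun t => ?_, fun t ht => ?_⟩
  · simp [hu_orbit (Set.mem_range_self l), hg_orbit]
  · simpa [abs_of_nonneg (hu_mem t).1] using mul_le_one₀ (hu_mem t).2 (norm_nonneg _) (hg_le t)
  · simp [hu_W ht]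

end OrbitBump

theorem ZeroAtInftyContinuousMap.norm_eq_of_forall_le_of_eq {X E : Type*} [TopologicalSpace X]
    [SeminormedAddCommGroup E] {f : C₀(X, E)} {C : ℝ} (hle : ∀ t, ‖f t‖ ≤ C) (t₀ : X)
    (heq : ‖f t₀‖ = C) : ‖f‖ = C := by
  rw [← ZeroAtInftyContinuousMap.norm_toBCF_eq_norm]
  exact le_antisymm ((BoundedContinuousFunction.norm_le ((norm_nonneg _).trans (hle t₀))).mpr hle)
    (heq ▸ f.toBCF.norm_coe_le_norm t₀)

theorem stmt11_general {X : Type*} [TopologicalSpace X] [LocallyCompactSpace X] [T2Space X]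
    [MulAction Circle X] [ContinuousSMul Circle X]
    (t₀ : X) (hfree : ∀ l : Circle, l • t₀ = t₀ → l = 1)
    (W : Set X) (hW : IsOpen W) (ht₀W : t₀ ∈ W)
    (hWinv : ∀ (l : Circle), ∀ t ∈ W, l • t ∈ W)
    (K : Set X) (hK : IsCompact K)
    (hWK : W ⊆ K) :
    ∃ h : C₀(X, ℂ), (∀ (l : Circle) (t : X), h (l • t) = (l : ℂ) * h t) ∧
      ‖h‖ = 1 ∧ h t₀ = 1 ∧ ∀ t ∉ W, h t = 0 := by
  let μ : Measure Circle := Measure.haarMeasure ⊤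
  have : IsProbabilityMeasure μ := ⟨Measure.haarMeasure_self⟩
  obtain ⟨v, hv_orbit, hv_le, hv_W⟩ := exists_orbit_bump hfree hW fun l => hWinv l t₀ ht₀W
  have hv_t₀ : v t₀ = 1 := by simpa using hv_orbit 1
  let h := equivariantAverage μ v
  have h_t₀ : h t₀ = 1 := hv_t₀ ▸
    equivariantAverage_apply_of_forall_smul μ fun l => by rw [hv_orbit, hv_t₀, mul_one]
  have h_W : ∀ t ∉ W, h t = 0 := fun t ht =>
    equivariantAverage_eq_zero μ fun l => hv_W _ fun hl => ht (by simpa using hWinv l⁻¹ _ hl)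
  have h_supp : HasCompactSupport h :=
    HasCompactSupport.intro hK fun t ht => h_W t fun hw => ht (hWK hw)
  refine ⟨⟨h, h_supp.is_zero_at_infty⟩, equivariantAverage_smul μ v, ?_, h_t₀, h_W⟩
  exact ZeroAtInftyContinuousMap.norm_eq_of_forall_le_of_eq (norm_equivariantAverage_le μ hv_le) t₀
    (show ‖h t₀‖ = 1 by rw [h_t₀, norm_one])

theorem stmt11 {X : Type*} [TopologicalSpace X] [LocallyCompactSpace X] [T2Space X]
    [MulAction Circle X] [ContinuousSMul Circle X]
    (t₀ : X) (hfree : ∀ l : Circle, l • t₀ = t₀ → l = 1)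
    (W : Set X) (hW : IsOpen W) (ht₀W : t₀ ∈ W)
    (hWinv : ∀ (l : Circle), ∀ t ∈ W, l • t ∈ W)
    (K : Set X) (hK : IsCompact K) (hKinv : ∀ (l : Circle), ∀ t ∈ K, l • t ∈ K)
    (hWK : W ⊆ K) :
    ∃ h : C₀(X, ℂ), (∀ (l : Circle) (t : X), h (l • t) = (l : ℂ) * h t) ∧
      ‖h‖ = 1 ∧ h t₀ = 1 ∧ ∀ t ∉ W, h t = 0 :=
  stmt11_general t₀ hfree W hW ht₀W hWinv K hK hWK
end
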